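/- arXiv:1808.06747 — 2 statements merged into one kernel-verified Lean document; each statement's English description precedes it below -/
import Mathlib

section
/- Let X be a Banach lattice in which every norm bounded order closed convex set is |σ|(X, X_n^~)-sequentially closed (property P4). Then X has the disjoint order continuity property: every norm bounded disjoint sequence (f_n) in X₊ with f_n → 0 in σ(X, X_n^~) converges weakly to 0. -/
open Filter Topology Pointwise

noncomputable section

/-- A directed index type for nets. -/
structure DirectedType : Type 1 where
  ι : Type
  r : ι → ι → Prop
  nonempty : Nonempty ι
  refl : ∀ a, r a a
  trans : ∀ a b c, r a b → r b c → r a c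
  directed : ∀ a b, ∃ c, r a c ∧ r b c

/-- The natural numbers as a directed type (for sequences). -/
def natDir : DirectedType where
  ι := ℕ
  r := (· ≤ ·)
  nonempty := ⟨0⟩
  refl := fun _ => le_refl _
  trans := fun _ _ _ => le_trans
  directed := fun a b => ⟨max a b, le_max_left _ _, le_max_right _ _⟩

/-- A real valued net tends to zero. -/
def NetTendstoZero (D : DirectedType) (u : D.ι → ℝ) : Prop :=
  ∀ ε : ℝ, 0 < ε → ∃ i₀, ∀ i, D.r i₀ i → |u i| < ε

variable {X : Type*} [NormedAddCommGroup X] [Lattice X] [HasSolidNorm X] [IsOrderedAddMonoid X] [NormedSpace ℝ X]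

/-- Order convergence of a net: there is a decreasing net `h` with infimum `0`
dominating `|f i - x|` eventually. -/
def OrderConvNet (D : DirectedType) (f : D.ι → X) (x : X) : Prop :=
  ∃ (E : DirectedType) (h : E.ι → X),
    (∀ γ₁ γ₂, E.r γ₁ γ₂ → h γ₂ ≤ h γ₁) ∧ IsGLB (Set.range h) 0 ∧
      ∀ γ, ∃ i₀, ∀ i, D.r i₀ i → |f i - x| ≤ h γ

/-- The order closure of a set: all limits of order convergent nets from the set. -/
def OrderClosure (C : Set X) : Set X :=
  {x | ∃ (D : DirectedType) (f : D.ι → X), (∀ i, f i ∈ C) ∧ OrderConvNet D f x}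

/-- A set is order closed if it contains all order limits of nets from it. -/
def IsOrderClosed (C : Set X) : Prop := OrderClosure C ⊆ C

/-- Unbounded order convergence of a net. -/
def UOConvNet (D : DirectedType) (f : D.ι → X) (x : X) : Prop :=
  ∀ h : X, 0 ≤ h → OrderConvNet D (fun i => |f i - x| ⊓ h) 0

/-- Membership in the order continuous dual `X_n^~`. -/
def InOCDual (g : X →L[ℝ] ℝ) : Prop :=
  ∀ (D : DirectedType) (f : D.ι → X), OrderConvNet D f 0 →
    NetTendstoZero D fun i => g (f i)

/-- Membership in the unbounded order continuous dual `X_uo^~`. -/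
def InUODual (g : X →L[ℝ] ℝ) : Prop :=
  ∀ (D : DirectedType) (f : D.ι → X), (∃ M, ∀ i, ‖f i‖ ≤ M) → UOConvNet D f 0 →
    NetTendstoZero D fun i => g (f i)

/-- Convergence of a net in the topology `σ(X, X_n^~)`. -/
def SigmaNConvNet (D : DirectedType) (f : D.ι → X) (x : X) : Prop :=
  ∀ g : X →L[ℝ] ℝ, InOCDual g → NetTendstoZero D fun i => g (f i) - g x

/-- Convergence of a net in the topology `σ(X, X_uo^~)`. -/
def SigmaUOConvNet (D : DirectedType) (f : D.ι → X) (x : X) : Prop :=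
  ∀ g : X →L[ℝ] ℝ, InUODual g → NetTendstoZero D fun i => g (f i) - g x

/-- A set is `σ(X, X_n^~)`-closed. -/
def IsSigmaNClosed (C : Set X) : Prop :=
  ∀ (D : DirectedType) (f : D.ι → X), (∀ i, f i ∈ C) →
    ∀ x, SigmaNConvNet D f x → x ∈ C

/-- A set is `σ(X, X_uo^~)`-closed. -/
def IsSigmaUOClosed (C : Set X) : Prop :=
  ∀ (D : DirectedType) (f : D.ι → X), (∀ i, f i ∈ C) →
    ∀ x, SigmaUOConvNet D f x → x ∈ C

/-- The `σ(X, X_n^~)`-closure of a set. -/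
def SigmaNClosure (C : Set X) : Set X :=
  {x | ∃ (D : DirectedType) (f : D.ι → X), (∀ i, f i ∈ C) ∧ SigmaNConvNet D f x}

/-- The `|σ|(X, X_n^~)`-sequential closure of a set. -/
def AbsSigmaSeqClosure (C : Set X) : Set X :=
  {x | ∃ s : ℕ → X, (∀ n, s n ∈ C) ∧
    ∀ g : X →L[ℝ] ℝ, InOCDual g → Tendsto (fun n => g (|s n - x|)) atTop (𝓝 0)}

/-- A set is `|σ|(X, X_n^~)`-sequentially closed. -/
def IsAbsSigmaSeqClosed (C : Set X) : Prop := AbsSigmaSeqClosure C ⊆ C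

/-- The order on the dual: `g ≤ h` iff `g x ≤ h x` on the positive cone. -/
def dualLE (g h : X →L[ℝ] ℝ) : Prop := ∀ x : X, 0 ≤ x → g x ≤ h x

/-- Order continuity of the norm on a subset `S` of the dual: every net in `S`
decreasing to `0` (infimum `0` among lower bounds from `S`) converges to `0` in
the operator norm. -/
def DualOCOn (S : Set (X →L[ℝ] ℝ)) : Prop :=
  ∀ (D : DirectedType) (f : D.ι → (X →L[ℝ] ℝ)), (∀ i, f i ∈ S) →
    (∀ i j, D.r i j → dualLE (f j) (f i)) → (∀ i, dualLE 0 (f i)) →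
    (∀ h ∈ S, (∀ i, dualLE h (f i)) → dualLE h 0) →
    NetTendstoZero D fun i => ‖f i‖

/-- A sequence is weakly null. -/
def WeaklyNull (f : ℕ → X) : Prop :=
  ∀ g : X →L[ℝ] ℝ, Tendsto (fun n => g (f n)) atTop (𝓝 0)

/-- The sequence satisfies a lower `ℓ¹`-estimate, i.e. it is equivalent to the
unit vector basis of `ℓ¹`. -/
def IsL1Basic (f : ℕ → X) : Prop :=
  ∃ M : ℝ, 0 < M ∧ ∀ (m : ℕ) (a : ℕ → ℝ),
    (1 / M) * ∑ k ∈ Finset.range m, |a k| ≤ ‖∑ k ∈ Finset.range m, a k • f k‖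

variable (X)

/-- Order continuity of the norm of `X`. -/
def OCNorm : Prop :=
  ∀ (D : DirectedType) (f : D.ι → X), (∀ i j, D.r i j → f j ≤ f i) →
    IsGLB (Set.range f) 0 → NetTendstoZero D fun i => ‖f i‖

/-- The order continuous dual as a set of continuous linear functionals. -/
def OCDual : Set (X →L[ℝ] ℝ) := {g | InOCDual g}

/-- The norm dual `X*` is order continuous. -/
def DualOrderContinuous : Prop := DualOCOn (Set.univ : Set (X →L[ℝ] ℝ))

/-- The order continuous dual `X_n^~` is order continuous. -/
def OCDualOrderContinuous : Prop := DualOCOn (OCDual X)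

/-- `X` is monotonically complete. -/
def MonotonicallyComplete : Prop :=
  ∀ (D : DirectedType) (f : D.ι → X), (∀ i j, D.r i j → f i ≤ f j) →
    (∃ M, ∀ i, ‖f i‖ ≤ M) → ∃ s, IsLUB (Set.range f) s

/-- `X` is Dedekind complete. -/
def DedekindComplete : Prop :=
  ∀ S : Set X, S.Nonempty → BddAbove S → ∃ s, IsLUB S s

/-- `X` is σ-Dedekind complete. -/
def SigmaDedekindComplete : Prop :=
  ∀ f : ℕ → X, BddAbove (Set.range f) → ∃ s, IsLUB (Set.range f) s

/-- `X` has the weak Fatou property. -/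
def WeakFatou : Prop :=
  ∃ r : ℝ, 0 < r ∧ ∀ (D : DirectedType) (f : D.ι → X),
    (∀ i j, D.r i j → f i ≤ f j) → ∀ s, IsLUB (Set.range f) s →
    ∀ M : ℝ, (∀ i, ‖f i‖ ≤ M) → ‖s‖ ≤ r * M

/-- `X_n^~` separates the points of `X`. -/
def OCDualSeparatesPoints : Prop :=
  ∀ x : X, x ≠ 0 → ∃ g : X →L[ℝ] ℝ, InOCDual g ∧ g x ≠ 0

/-- `X_n^~` contains a strictly positive element. -/
def HasStrictlyPositiveOCFunctional : Prop :=
  ∃ g : X →L[ℝ] ℝ, InOCDual g ∧ ∀ x : X, x ≠ 0 → 0 < g (|x|)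

/-- The unit ball `B` determined by `X_n^~`. -/
def KSBall : Set X :=
  {x | ∀ g : X →L[ℝ] ℝ, InOCDual g → dualLE 0 g → ‖g‖ ≤ 1 → g (|x|) ≤ 1}

/-- `σ(X, X_n^~)` has the Krein–Smulian property. -/
def KreinSmulianProperty : Prop :=
  ∀ C : Set X, Convex ℝ C →
    (∀ k : ℕ, IsSigmaNClosed (C ∩ (k : ℝ) • KSBall X)) → IsSigmaNClosed C

/-- Property `P1`: every order closed convex set is `σ(X, X_n^~)`-closed. -/
def PropP1 : Prop := ∀ C : Set X, Convex ℝ C → IsOrderClosed C → IsSigmaNClosed C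

/-- Property `P4`: every norm bounded order closed convex set is
`|σ|(X, X_n^~)`-sequentially closed. -/
def PropP4 : Prop :=
  ∀ C : Set X, Convex ℝ C → (∃ M, ∀ x ∈ C, ‖x‖ ≤ M) → IsOrderClosed C →
    IsAbsSigmaSeqClosed C

/-- The disjoint order continuity property. -/
def DOCP : Prop :=
  ∀ f : ℕ → X, (∀ n, 0 ≤ f n) → (∃ M, ∀ n, ‖f n‖ ≤ M) →
    (∀ n m, n ≠ m → f n ⊓ f m = 0) →
    (∀ g : X →L[ℝ] ℝ, InOCDual g → Tendsto (fun n => g (f n)) atTop (𝓝 0)) →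
    WeaklyNull f

/-- The order continuous part `X_a` of `X`. -/
def OrderContPart : Set X :=
  {f | ∀ (D : DirectedType) (g : D.ι → X), (∀ i, |g i| ≤ |f|) →
    OrderConvNet D g 0 → NetTendstoZero D fun i => ‖g i‖}

/-- The order subsequence splitting property. -/
def OSSP : Prop :=
  ∀ f : ℕ → X, (∀ n, 0 ≤ f n) → (∃ M, ∀ n, ‖f n‖ ≤ M) → UOConvNet natDir f 0 →
    ∃ φ : ℕ → ℕ, StrictMono φ ∧ ∃ x y z : ℕ → X,
      (∀ k, f (φ k) = x k + y k + z k) ∧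
      (∀ k, 0 ≤ x k) ∧ (∀ k, 0 ≤ y k) ∧ (∀ k, 0 ≤ z k) ∧
      (∀ k, x k ∈ OrderContPart X) ∧
      (∀ k l, k ≠ l → y k ⊓ y l = 0) ∧
      (∃ b, ∀ k, z k ≤ b)

/-!
If `(f n)` is not weakly null, then `ε ≤ g (e k)` along a subsequence `e k = f (φ k)` for some
`g ∈ X*` and `ε > 0`. Let `K` be the σ-convex hull `{∑ c k • e k | c ≥ 0, ∑ c k = 1}`: it is
convex and bounded, and `g ≥ ε` on `K`, so `0 ∉ K`. But `e k ∈ K` and `|e k - 0| = e k` tends to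
`0` in `σ(X, X_n^~)`, so P4 puts `0` in `K` once `K` is shown to be order closed.

Let `∑ a i k • e k → x` in order. The components `x ⊓ 2 • e k` (the factor `2` leaves room above
every coefficient `≤ 1`) are order limits of `a i k • e k`, which forces `a i k → c k` with `x ⊓ 2 • e k = c k • e k`. Then
`x - ∑ c k • e k` is disjoint from every `e k`, hence from `x`, so it vanishes. No mass escapes:
if `∑ c k < 1`, all `|a i k - c k| • e k` lie eventually below one `b` of the dominating set, and
one assembles disjoint blocks of arbitrarily large total coefficient mass below `b`, whereas
`ε ≤ g (e k)` bounds that mass by `‖g‖ * ‖b‖ / ε`.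
-/

section LatticeOrderedGroup

variable {X : Type*} [Lattice X] [AddCommGroup X] [IsOrderedAddMonoid X] {a b c : X}

lemma add_inf_le_inf_add_inf (ha : 0 ≤ a) (hb : 0 ≤ b) (hc : 0 ≤ c) :
    (a + b) ⊓ c ≤ a ⊓ c + b ⊓ c := by
  rw [inf_add, add_inf, add_inf]
  exact le_inf (le_inf inf_le_left (inf_le_right.trans (le_add_of_nonneg_left ha)))
    (le_inf (inf_le_right.trans (le_add_of_nonneg_right hb))
      (inf_le_right.trans (le_add_of_nonneg_left hc)))

lemma add_inf_eq_zero (ha : 0 ≤ a) (hb : 0 ≤ b) (hc : 0 ≤ c) (hac : a ⊓ c = 0)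
    (hbc : b ⊓ c = 0) : (a + b) ⊓ c = 0 :=
  le_antisymm (by simpa [hac, hbc] using add_inf_le_inf_add_inf ha hb hc)
    (le_inf (add_nonneg ha hb) hc)

lemma add_eq_sup_of_inf_eq_zero (h : a ⊓ b = 0) : a + b = a ⊔ b := by
  rw [← inf_add_sup, h, zero_add]

lemma nsmul_inf_eq_zero (ha : 0 ≤ a) (hc : 0 ≤ c) (hac : a ⊓ c = 0) (n : ℕ) :
    (n • a) ⊓ c = 0 := by
  induction n with
  | zero => simpa using hc
  | succ n ih => rw [succ_nsmul]; exact add_inf_eq_zero (nsmul_nonneg ha n) ha hc ih hac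

lemma Finset.sum_inf_eq_zero {ι : Type*} {u : ι → X} (hu : ∀ k, 0 ≤ u k) (hc : 0 ≤ c)
    (F : Finset ι) (hF : ∀ k ∈ F, u k ⊓ c = 0) : (∑ k ∈ F, u k) ⊓ c = 0 := by
  classical
  induction F using Finset.induction_on with
  | empty => simpa using hc
  | insert j F hj ih =>
    rw [Finset.sum_insert hj]
    exact add_inf_eq_zero (hu j) (Finset.sum_nonneg fun k _ => hu k) hc
      (hF j (Finset.mem_insert_self j F)) (ih fun k hk => hF k (Finset.mem_insert_of_mem hk))

lemma Finset.sum_le_of_pairwise_inf_eq_zero {ι : Type*} {u : ι → X} (hu : ∀ k, 0 ≤ u k)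
    (hdisj : Pairwise fun j k => u j ⊓ u k = 0) (hb : 0 ≤ b) (F : Finset ι)
    (hF : ∀ k ∈ F, u k ≤ b) : ∑ k ∈ F, u k ≤ b := by
  classical
  induction F using Finset.induction_on with
  | empty => simpa using hb
  | insert j F hj ih =>
    have hjF : (∑ k ∈ F, u k) ⊓ u j = 0 := Finset.sum_inf_eq_zero hu (hu j) F
      fun k hk => hdisj (ne_of_mem_of_not_mem hk hj)
    rw [Finset.sum_insert hj, add_comm, add_eq_sup_of_inf_eq_zero hjF]
    exact sup_le (ih fun k hk => hF k (Finset.mem_insert_of_mem hk))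
      (hF j (Finset.mem_insert_self j F))

end LatticeOrderedGroup

section VectorLattice

variable {X : Type*} [Lattice X] [AddCommGroup X] [IsOrderedAddMonoid X] [Module ℝ X]
  [IsOrderedModule ℝ X]

lemma smul_inf_eq_zero {a c : X} (ha : 0 ≤ a) (hc : 0 ≤ c) (hac : a ⊓ c = 0) {s : ℝ}
    (hs : 0 ≤ s) : (s • a) ⊓ c = 0 := by
  have hs_le : s • a ≤ (⌈s⌉₊ : ℕ) • a := by
    rw [← Nat.cast_smul_eq_nsmul ℝ]
    exact smul_le_smul_of_nonneg_right (Nat.le_ceil s) ha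
  exact le_antisymm ((inf_le_inf_right c hs_le).trans (nsmul_inf_eq_zero ha hc hac _).le)
    (le_inf (smul_nonneg hs ha) hc)

lemma pairwise_smul_inf_eq_zero {ι : Type*} {e : ι → X} (he : ∀ k, 0 ≤ e k)
    (hdisj : Pairwise fun j k => e j ⊓ e k = 0) {a : ι → ℝ} (ha : ∀ k, 0 ≤ a k) :
    Pairwise fun j k => (a j • e j) ⊓ (a k • e k) = 0 := by
  intro j k hjk
  have hkj : (a k • e k) ⊓ e j = 0 :=
    smul_inf_eq_zero (he k) (he j) (by rw [inf_comm]; exact hdisj hjk) (ha k)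
  exact smul_inf_eq_zero (he j) (smul_nonneg (ha k) (he k)) (by rwa [inf_comm]) (ha j)

lemma abs_smul_of_nonneg {e : X} (he : 0 ≤ e) (t : ℝ) : |t • e| = |t| • e := by
  rcases le_total 0 t with ht | ht
  · rw [abs_of_nonneg (smul_nonneg ht he), abs_of_nonneg ht]
  · rw [abs_of_nonpos (smul_nonpos_of_nonpos_of_nonneg ht he), abs_of_nonpos ht, neg_smul]

lemma sub_smul_inf_eq_zero {x e : X} (he : 0 ≤ e) {c : ℝ} (hc1 : c ≤ 1)
    (hx : x ⊓ (2 : ℝ) • e = c • e) : (x - c • e) ⊓ e = 0 := by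
  have hcx : c • e ≤ x := hx ▸ inf_le_left
  have hce : c • e + e ≤ (2 : ℝ) • e := by
    calc c • e + e = (c + 1) • e := by rw [add_smul, one_smul]
      _ ≤ (2 : ℝ) • e := smul_le_smul_of_nonneg_right (by linarith) he
  refine le_antisymm ?_ (le_inf (sub_nonneg.2 hcx) he)
  calc (x - c • e) ⊓ e = x ⊓ (c • e + e) - c • e := by rw [inf_sub, add_sub_cancel_left]
    _ ≤ x ⊓ (2 : ℝ) • e - c • e := sub_le_sub_right (inf_le_inf_left x hce) _
    _ = 0 := by rw [hx, sub_self]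

end VectorLattice

section OrderConvergence

variable {X : Type*} [Lattice X] [AddCommGroup X] [IsOrderedAddMonoid X] {ι : Type*}

def OrderTendsto (f : ι → X) (l : Filter ι) (x : X) : Prop :=
  ∃ H : Set X, H.Nonempty ∧ IsGLB H 0 ∧ ∀ b ∈ H, ∀ᶠ i in l, |f i - x| ≤ b

namespace OrderTendsto

variable {f : ι → X} {l : Filter ι} {x : X}

lemma inf_const (h : OrderTendsto f l x) (c : X) :
    OrderTendsto (fun i => f i ⊓ c) l (x ⊓ c) := by
  obtain ⟨H, hne, hH, hf⟩ := h
  exact ⟨H, hne, hH, fun b hb =>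
    (hf b hb).mono fun i hi => (abs_inf_sub_inf_le_abs _ _ _).trans hi⟩

lemma le_of_eventually_le [l.NeBot] (h : OrderTendsto f l x) {a : X}
    (ha : ∀ᶠ i in l, a ≤ f i) : a ≤ x := by
  obtain ⟨H, -, hH, hf⟩ := h
  refine sub_nonpos.1 (hH.2 fun b hb => ?_)
  obtain ⟨i, hai, hi⟩ := (ha.and (hf b hb)).exists
  exact (sub_le_sub_right hai x).trans ((le_abs_self _).trans hi)

lemma inf_eq_zero [l.NeBot] (h : OrderTendsto f l x) (hf0 : ∀ i, 0 ≤ f i) {r : X}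
    (hr : 0 ≤ r) (hrf : ∀ᶠ i in l, r ⊓ f i = 0) : r ⊓ x = 0 := by
  have hx : 0 ≤ x := h.le_of_eventually_le (.of_forall hf0)
  obtain ⟨H, -, hH, hfx⟩ := h
  refine le_antisymm (hH.2 fun b hb => ?_) (le_inf hr hx)
  obtain ⟨i, hri, hi⟩ := (hrf.and (hfx b hb)).exists
  have hxb : x ≤ f i + b :=
    sub_le_iff_le_add'.1 ((le_abs_self _).trans ((abs_sub_comm x (f i)).trans_le hi))
  calc r ⊓ x ≤ (f i + b) ⊓ r := by rw [inf_comm]; exact inf_le_inf_right r hxb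
    _ ≤ f i ⊓ r + b ⊓ r := add_inf_le_inf_add_inf (hf0 i) (hH.1 hb) hr
    _ ≤ b := by rw [inf_comm, hri, zero_add]; exact inf_le_left

end OrderTendsto

end OrderConvergence

namespace DirectedType

def atTop (D : DirectedType) : Filter D.ι := ⨅ i₀, 𝓟 {i | D.r i₀ i}

lemma mem_atTop {D : DirectedType} {s : Set D.ι} :
    s ∈ D.atTop ↔ ∃ i₀, ∀ i, D.r i₀ i → i ∈ s := by
  have := D.nonempty
  have hdir : Directed (· ≥ ·) fun i₀ => 𝓟 {i | D.r i₀ i} := fun a b => by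
    obtain ⟨c, hac, hbc⟩ := D.directed a b
    exact ⟨c, principal_mono.2 fun i hi => D.trans _ _ _ hac hi,
      principal_mono.2 fun i hi => D.trans _ _ _ hbc hi⟩
  simp only [DirectedType.atTop, mem_iInf_of_directed hdir, mem_principal, Set.subset_def]
  rfl

instance (D : DirectedType) : D.atTop.NeBot :=
  forall_mem_nonempty_iff_neBot.1 fun _ hs => by
    obtain ⟨i₀, hi₀⟩ := mem_atTop.1 hs
    exact ⟨i₀, hi₀ i₀ (D.refl i₀)⟩

end DirectedType

lemma OrderConvNet.orderTendsto {X : Type*} [NormedAddCommGroup X] [Lattice X]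
    {D : DirectedType} {f : D.ι → X} {x : X} (h : OrderConvNet D f x) :
    OrderTendsto f D.atTop x := by
  obtain ⟨E, h, -, hglb, hdom⟩ := h
  refine ⟨Set.range h, Set.range_nonempty_iff_nonempty.2 E.nonempty, hglb, ?_⟩
  rintro - ⟨γ, rfl⟩
  exact DirectedType.mem_atTop.2 (hdom γ)

lemma exists_finset_le_sum_of_tendsto_zero {ι : Type*} {l : Filter ι} [l.NeBot] {μ : ι → ℕ → ℝ}
    (hμ0 : ∀ i k, 0 ≤ μ i k) (hμ : ∀ k, Tendsto (μ · k) l (𝓝 0)) {δ : ℝ} (hδ : 0 < δ)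
    (hmass : ∀ i, ∃ N, δ ≤ ∑ k ∈ Finset.range N, μ i k) {S : Set ι} (hS : S ∈ l) (n : ℕ) :
    ∃ (F : Finset ℕ) (σ : ℕ → ι), (∀ k, σ k ∈ S) ∧ n * (δ / 2) ≤ ∑ k ∈ F, μ (σ k) k := by
  classical
  induction n with
  | zero =>
    obtain ⟨i, hi⟩ := Filter.nonempty_of_mem hS
    exact ⟨∅, fun _ => i, fun _ => hi, by simp⟩
  | succ n ih =>
    obtain ⟨F, σ, hσS, hF⟩ := ih
    have hsmall : ∀ᶠ i in l, ∑ k ∈ F, μ i k < δ / 2 := by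
      have := tendsto_finsetSum F fun k _ => hμ k
      rw [Finset.sum_const_zero] at this
      exact this.eventually (gt_mem_nhds (half_pos hδ))
    obtain ⟨i, hiS, hi⟩ := ((Filter.eventually_mem_set.2 hS).and hsmall).exists
    obtain ⟨N, hN⟩ := hmass i
    have hnew : δ / 2 ≤ ∑ k ∈ Finset.range N \ F, μ i k := by
      have hinter : ∑ k ∈ Finset.range N ∩ F, μ i k ≤ ∑ k ∈ F, μ i k :=
        Finset.sum_le_sum_of_subset_of_nonneg Finset.inter_subset_right fun k _ _ => hμ0 i k
      linarith [Finset.sum_inter_add_sum_sdiff (Finset.range N) F (μ i)]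
    let σ' : ℕ → ι := fun k => if k ∈ F then σ k else i
    have hold : ∑ k ∈ F, μ (σ' k) k = ∑ k ∈ F, μ (σ k) k :=
      Finset.sum_congr rfl fun k hk => by simp [σ', hk]
    have hfresh : ∑ k ∈ Finset.range N \ F, μ (σ' k) k = ∑ k ∈ Finset.range N \ F, μ i k :=
      Finset.sum_congr rfl fun k hk => by simp [σ', (Finset.mem_sdiff.1 hk).2]
    refine ⟨F ∪ (Finset.range N \ F), σ',
      fun k => by simp only [σ']; split_ifs <;> simp [hσS, hiS], ?_⟩
    rw [Finset.sum_union Finset.disjoint_sdiff, hold, hfresh]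
    push_cast
    linarith

section NormedLattice

variable {X : Type*} [NormedAddCommGroup X] [Lattice X] [HasSolidNorm X] [IsOrderedAddMonoid X]

lemma HasSum.inf_eq_zero {ι : Type*} {u : ι → X} {x r : X} (hx : HasSum u x)
    (hu : ∀ k, 0 ≤ u k) (hr : 0 ≤ r) (hur : ∀ k, u k ⊓ r = 0) : x ⊓ r = 0 :=
  tendsto_nhds_unique (hx.inf_nhds tendsto_const_nhds)
    (tendsto_const_nhds.congr fun F => (Finset.sum_inf_eq_zero hu hr F fun k _ => hur k).symm)

variable [NormedSpace ℝ X]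

/- The order is only assumed compatible with addition. Since `0 ≤ 2 • y` forces `0 ≤ y`, dyadic
multiples of `a` are positive, and the positive cone is closed. -/
lemma smul_nonneg_of_hasSolidNorm {s : ℝ} (hs : 0 ≤ s) {a : X} (ha : 0 ≤ a) : 0 ≤ s • a := by
  have dyadic : ∀ m k : ℕ, 0 ≤ ((k : ℝ) / 2 ^ m) • a := by
    intro m
    induction m with
    | zero => intro k; simpa [Nat.cast_smul_eq_nsmul] using nsmul_nonneg ha k
    | succ m ih =>
      intro k
      refine nsmul_two_semiclosed ?_
      have halve : (2 : ℝ) * (k / 2 ^ (m + 1)) = k / 2 ^ m := by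
        rw [pow_succ]; field_simp
      rw [two_nsmul, ← two_smul ℝ, smul_smul, halve]
      exact ih k
  have hlim : Tendsto (fun m : ℕ => ((⌊s * 2 ^ m⌋₊ : ℝ) / 2 ^ m) • a) atTop (𝓝 (s • a)) :=
    ((tendsto_nat_floor_mul_div_atTop hs).comp
      (tendsto_pow_atTop_atTop_of_one_lt one_lt_two)).smul_const a
  exact ge_of_tendsto hlim (.of_forall fun m => dyadic m _)

instance : IsOrderedModule ℝ X :=
  .of_smul_nonneg fun _ hs _ ha => smul_nonneg_of_hasSolidNorm hs ha

lemma nonpos_of_forall_le_smul {a e : X} (h : ∀ δ : ℝ, 0 < δ → a ≤ δ • e) : a ≤ 0 := by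
  have hlim : Tendsto (fun δ : ℝ => δ • e) (𝓝[>] 0) (𝓝 0) := by
    simpa using (tendsto_id.smul_const e).mono_left (nhdsWithin_le_nhds (a := (0 : ℝ)))
  exact ge_of_tendsto hlim (eventually_nhdsWithin_of_forall h)

lemma OrderTendsto.eq_smul_of_mapClusterPt {ι : Type*} {l : Filter ι} {s : ι → ℝ} {e x : X}
    (he : 0 ≤ e) (h : OrderTendsto (fun i => s i • e) l x) {t : ℝ} (ht : MapClusterPt t l s) :
    x = t • e := by
  obtain ⟨H, -, hH, hf⟩ := h
  have hbound : ∀ b ∈ H, |x - t • e| ≤ b := fun b hb => by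
    refine sub_nonpos.1 (nonpos_of_forall_le_smul (e := e) fun δ hδ => ?_)
    obtain ⟨i, hsi, hi⟩ :=
      ((ht.frequently (Metric.ball_mem_nhds t hδ)).and_eventually (hf b hb)).exists
    have hst : |s i - t| ≤ δ := (Real.dist_eq _ _ ▸ Metric.mem_ball.1 hsi).le
    rw [sub_le_iff_le_add']
    calc |x - t • e| = |(x - s i • e) + (s i - t) • e| := by rw [sub_smul, sub_add_sub_cancel]
      _ ≤ |x - s i • e| + |(s i - t) • e| := abs_add_le _ _
      _ ≤ b + δ • e := add_le_add ((abs_sub_comm _ _).trans_le hi)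
          (by rw [abs_smul_of_nonneg he]; exact smul_le_smul_of_nonneg_right hst he)
  have h0 : |x - t • e| ≤ 0 := hH.2 hbound
  exact sub_eq_zero.1 (le_antisymm ((le_abs_self _).trans h0)
    (neg_nonpos.1 ((neg_le_abs _).trans h0)))

variable {e : ℕ → X}

lemma mul_sum_le_opNorm_mul_norm (he : ∀ k, 0 ≤ e k)
    (hdisj : Pairwise fun j k => e j ⊓ e k = 0) (g : X →L[ℝ] ℝ) {ε : ℝ}
    (hge : ∀ k, ε ≤ g (e k)) {a : ℕ → ℝ} (ha : ∀ k, 0 ≤ a k) {b : X} (hb : 0 ≤ b)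
    (F : Finset ℕ) (hF : ∀ k ∈ F, a k • e k ≤ b) : ε * ∑ k ∈ F, a k ≤ ‖g‖ * ‖b‖ := by
  have hsum0 : 0 ≤ ∑ k ∈ F, a k • e k := Finset.sum_nonneg fun k _ => smul_nonneg (ha k) (he k)
  have hsum_le : ∑ k ∈ F, a k • e k ≤ b := Finset.sum_le_of_pairwise_inf_eq_zero
    (fun k => smul_nonneg (ha k) (he k)) (pairwise_smul_inf_eq_zero he hdisj ha) hb F hF
  calc ε * ∑ k ∈ F, a k = ∑ k ∈ F, a k * ε := by rw [Finset.mul_sum]; simp_rw [mul_comm]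
    _ ≤ ∑ k ∈ F, a k * g (e k) :=
        Finset.sum_le_sum fun k _ => mul_le_mul_of_nonneg_left (hge k) (ha k)
    _ = g (∑ k ∈ F, a k • e k) := by simp [map_sum]
    _ ≤ ‖g‖ * ‖∑ k ∈ F, a k • e k‖ := (le_abs_self _).trans (g.le_opNorm _)
    _ ≤ ‖g‖ * ‖b‖ := mul_le_mul_of_nonneg_left (norm_le_norm_of_abs_le_abs
        (by rwa [abs_of_nonneg hsum0, abs_of_nonneg hb])) (norm_nonneg g)

lemma not_eventually_forall_smul_le (he : ∀ k, 0 ≤ e k)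
    (hdisj : Pairwise fun j k => e j ⊓ e k = 0) (g : X →L[ℝ] ℝ) {ε : ℝ} (hε : 0 < ε)
    (hge : ∀ k, ε ≤ g (e k)) {ι : Type*} {l : Filter ι} [l.NeBot] {μ : ι → ℕ → ℝ}
    (hμ0 : ∀ i k, 0 ≤ μ i k) (hμ : ∀ k, Tendsto (μ · k) l (𝓝 0)) {δ : ℝ} (hδ : 0 < δ)
    (hmass : ∀ i, ∃ N, δ ≤ ∑ k ∈ Finset.range N, μ i k) {b : X} (hb : 0 ≤ b) :
    ¬ ∀ᶠ i in l, ∀ k, μ i k • e k ≤ b := by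
  intro hS
  obtain ⟨n, hn⟩ := exists_nat_gt (‖g‖ * ‖b‖ / (ε * (δ / 2)))
  obtain ⟨F, σ, hσ, hF⟩ := exists_finset_le_sum_of_tendsto_zero hμ0 hμ hδ hmass hS n
  have hbound := mul_sum_le_opNorm_mul_norm he hdisj g hge (fun k => hμ0 (σ k) k) hb F
    fun k _ => hσ k k
  rw [div_lt_iff₀ (by positivity)] at hn
  nlinarith [mul_le_mul_of_nonneg_left hF hε.le]

lemma inf_two_smul_eq_of_hasSum (he : ∀ k, 0 ≤ e k) (hdisj : Pairwise fun j k => e j ⊓ e k = 0)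
    {c : ℕ → ℝ} (hc0 : ∀ k, 0 ≤ c k) (hc1 : ∀ k, c k ≤ 1) {x : X}
    (hx : HasSum (fun k => c k • e k) x) (k : ℕ) : x ⊓ (2 : ℝ) • e k = c k • e k := by
  classical
  have hw : HasSum (Function.update (fun j => c j • e j) k 0) (x - c k • e k) := by
    simpa [sub_eq_neg_add] using hx.update k 0
  have hterm0 : ∀ j, 0 ≤ Function.update (fun j => c j • e j) k 0 j := fun j => by
    rcases eq_or_ne j k with rfl | hj
    · simp
    · simpa [Function.update_of_ne hj] using smul_nonneg (hc0 j) (he j)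
  have hwe : (x - c k • e k) ⊓ (2 : ℝ) • e k = 0 := by
    refine hw.inf_eq_zero hterm0 (smul_nonneg zero_le_two (he k)) fun j => ?_
    rcases eq_or_ne j k with rfl | hj
    · simpa using smul_nonneg zero_le_two (he j)
    · rw [Function.update_of_ne hj, inf_comm]
      refine smul_inf_eq_zero (he k) (smul_nonneg (hc0 j) (he j)) ?_ zero_le_two
      rw [inf_comm]
      exact smul_inf_eq_zero (he j) (he k) (hdisj hj) (hc0 j)
  have hck : c k • e k ≤ (2 : ℝ) • e k :=
    smul_le_smul_of_nonneg_right (by linarith [hc1 k]) (he k)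
  refine le_antisymm ?_ (le_inf (sub_nonneg.1 (hw.nonneg hterm0)) hck)
  calc x ⊓ (2 : ℝ) • e k = (c k • e k + (x - c k • e k)) ⊓ (2 : ℝ) • e k := by
        rw [add_sub_cancel]
    _ ≤ c k • e k ⊓ (2 : ℝ) • e k + (x - c k • e k) ⊓ (2 : ℝ) • e k :=
        add_inf_le_inf_add_inf (smul_nonneg (hc0 k) (he k)) (hw.nonneg hterm0)
          (smul_nonneg zero_le_two (he k))
    _ = c k • e k := by rw [hwe, add_zero, inf_eq_left.2 hck]

end NormedLattice

section SigmaConvexHull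

variable {X : Type*} [NormedAddCommGroup X] [NormedSpace ℝ X]

def sigmaConvexHull (e : ℕ → X) : Set X :=
  {x | ∃ c : ℕ → ℝ, (∀ k, 0 ≤ c k) ∧ HasSum c 1 ∧ HasSum (fun k => c k • e k) x}

lemma convex_sigmaConvexHull (e : ℕ → X) : Convex ℝ (sigmaConvexHull e) := by
  rintro x ⟨c, hc0, hc1, hcx⟩ y ⟨d, hd0, hd1, hdy⟩ s t hs ht hst
  refine ⟨fun k => s * c k + t * d k,
    fun k => add_nonneg (mul_nonneg hs (hc0 k)) (mul_nonneg ht (hd0 k)), ?_, ?_⟩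
  · simpa [hst] using (hc1.mul_left s).add (hd1.mul_left t)
  · convert (hcx.const_smul s).add (hdy.const_smul t) using 1
    funext k
    simp [add_smul, mul_smul]

lemma self_mem_sigmaConvexHull (e : ℕ → X) (n : ℕ) : e n ∈ sigmaConvexHull e := by
  classical
  refine ⟨fun k => if k = n then 1 else 0, fun k => by dsimp only; split_ifs <;> norm_num,
    hasSum_ite_eq n 1, ?_⟩
  simpa using hasSum_single (f := fun k => (if k = n then (1 : ℝ) else 0) • e k) n
    fun k hk => by simp [hk]

variable {e : ℕ → X}

lemma norm_le_of_mem_sigmaConvexHull {M : ℝ} (hM : ∀ k, ‖e k‖ ≤ M) {x : X}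
    (hx : x ∈ sigmaConvexHull e) : ‖x‖ ≤ M := by
  obtain ⟨c, hc0, hc1, hcx⟩ := hx
  refine hcx.norm_le_of_bounded (by simpa using hc1.mul_right M) fun k => ?_
  rw [norm_smul, Real.norm_of_nonneg (hc0 k)]
  exact mul_le_mul_of_nonneg_left (hM k) (hc0 k)

lemma le_apply_of_mem_sigmaConvexHull (g : X →L[ℝ] ℝ) {ε : ℝ} (hge : ∀ k, ε ≤ g (e k)) {x : X}
    (hx : x ∈ sigmaConvexHull e) : ε ≤ g x := by
  obtain ⟨c, hc0, hc1, hcx⟩ := hx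
  refine hasSum_le (fun k => ?_) (by simpa using hc1.mul_left ε) (by simpa using hcx.mapL g)
  rw [mul_comm]
  exact mul_le_mul_of_nonneg_left (hge k) (hc0 k)

end SigmaConvexHull

section OrderClosed

variable {X : Type*} [NormedAddCommGroup X] [Lattice X] [HasSolidNorm X] [IsOrderedAddMonoid X]
  [NormedSpace ℝ X] {e : ℕ → X} {ι : Type*} {l : Filter ι} [l.NeBot] {a : ι → ℕ → ℝ}
  {f : ι → X} {x : X}

lemma exists_tendsto_coeff_of_orderTendsto (he : ∀ k, 0 ≤ e k)
    (hdisj : Pairwise fun j k => e j ⊓ e k = 0)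
    (he0 : ∀ k, e k ≠ 0) (ha0 : ∀ i k, 0 ≤ a i k) (ha1 : ∀ i k, a i k ≤ 1)
    (haf : ∀ i, HasSum (fun k => a i k • e k) (f i)) (h : OrderTendsto f l x) (k : ℕ) :
    ∃ c, Tendsto (a · k) l (𝓝 c) ∧ x ⊓ (2 : ℝ) • e k = c • e k := by
  have hcoeff : OrderTendsto (fun i => a i k • e k) l (x ⊓ (2 : ℝ) • e k) := by
    simpa only [inf_two_smul_eq_of_hasSum he hdisj (ha0 _) (ha1 _) (haf _)] using
      h.inf_const ((2 : ℝ) • e k)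
  have hcluster : ∀ t, MapClusterPt t l (a · k) → x ⊓ (2 : ℝ) • e k = t • e k :=
    fun t ht => hcoeff.eq_smul_of_mapClusterPt (he k) ht
  have hIcc : ∀ᶠ i in l, a i k ∈ Set.Icc (0 : ℝ) 1 := .of_forall fun i => ⟨ha0 i k, ha1 i k⟩
  obtain ⟨c, -, hc⟩ := isCompact_Icc.exists_mapClusterPt (tendsto_principal.2 hIcc)
  refine ⟨c, isCompact_Icc.tendsto_nhds_of_unique_mapClusterPt hIcc fun t _ ht => ?_,
    hcluster c hc⟩
  exact smul_left_injective ℝ (he0 k) ((hcluster t ht).symm.trans (hcluster c hc))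

lemma eq_of_orderTendsto_of_inf_two_smul_eq (he : ∀ k, 0 ≤ e k)
    (hdisj : Pairwise fun j k => e j ⊓ e k = 0) (ha0 : ∀ i k, 0 ≤ a i k)
    (haf : ∀ i, HasSum (fun k => a i k • e k) (f i)) (h : OrderTendsto f l x) {c : ℕ → ℝ}
    (hc0 : ∀ k, 0 ≤ c k) (hc1 : ∀ k, c k ≤ 1) (hxc : ∀ k, x ⊓ (2 : ℝ) • e k = c k • e k)
    {y : X} (hy : HasSum (fun k => c k • e k) y) : x = y := by
  have hf0 : ∀ i, 0 ≤ f i := fun i => (haf i).nonneg fun k => smul_nonneg (ha0 i k) (he k)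
  have hx0 : 0 ≤ x := h.le_of_eventually_le (.of_forall hf0)
  have hy0 : 0 ≤ y := hy.nonneg fun k => smul_nonneg (hc0 k) (he k)
  have hyx : y ≤ x := le_of_tendsto' hy.tendsto_sum_nat fun n =>
    Finset.sum_le_of_pairwise_inf_eq_zero (fun k => smul_nonneg (hc0 k) (he k))
      (pairwise_smul_inf_eq_zero he hdisj hc0) hx0 _ fun k _ => hxc k ▸ inf_le_left
  have hr0 : 0 ≤ x - y := sub_nonneg.2 hyx
  have hre : ∀ k, e k ⊓ (x - y) = 0 := fun k => by
    have hky : c k • e k ≤ y := le_hasSum hy k fun j _ => smul_nonneg (hc0 j) (he j)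
    rw [inf_comm]
    exact le_antisymm ((inf_le_inf_right _ (sub_le_sub_left hky x)).trans
      (sub_smul_inf_eq_zero (he k) (hc1 k) (hxc k)).le) (le_inf hr0 (he k))
  have hrf : ∀ i, (x - y) ⊓ f i = 0 := fun i => by
    rw [inf_comm]
    exact (haf i).inf_eq_zero (fun k => smul_nonneg (ha0 i k) (he k)) hr0
      fun k => smul_inf_eq_zero (he k) hr0 (hre k) (ha0 i k)
  have hrx : (x - y) ⊓ x = 0 := h.inf_eq_zero hf0 hr0 (.of_forall hrf)
  rw [inf_eq_left.2 (sub_le_self x hy0)] at hrx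
  exact sub_eq_zero.1 hrx

lemma hasSum_one_of_orderTendsto (he : ∀ k, 0 ≤ e k) (hdisj : Pairwise fun j k => e j ⊓ e k = 0)
    (g : X →L[ℝ] ℝ) {ε : ℝ} (hε : 0 < ε) (hge : ∀ k, ε ≤ g (e k)) (ha0 : ∀ i k, 0 ≤ a i k)
    (ha1 : ∀ i, HasSum (a i) 1) (haf : ∀ i, HasSum (fun k => a i k • e k) (f i))
    (h : OrderTendsto f l x) {c : ℕ → ℝ} (hc : ∀ k, Tendsto (a · k) l (𝓝 (c k)))
    (hxc : ∀ k, x ⊓ (2 : ℝ) • e k = c k • e k) (hc0 : ∀ k, 0 ≤ c k) (hcs : Summable c)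
    (hcle : ∑' k, c k ≤ 1) : HasSum c 1 := by
  obtain ⟨H, ⟨b, hb⟩, hH, hfx⟩ := h
  refine hcs.hasSum_iff.2 (le_antisymm hcle (not_lt.1 fun hlt => ?_))
  set δ := 1 - ∑' k, c k
  refine not_eventually_forall_smul_le he hdisj g hε hge (μ := fun i k => |a i k - c k|)
    (fun i k => abs_nonneg _) (fun k => by simpa using ((hc k).sub_const (c k)).abs)
    (half_pos (sub_pos.2 hlt)) (fun i => ?_) (hH.1 hb) ((hfx b hb).mono fun i hi k => ?_)
  · obtain ⟨N, hN⟩ := ((ha1 i).tendsto_sum_nat.eventually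
      (lt_mem_nhds (show 1 - δ / 2 < 1 by linarith))).exists
    refine ⟨N, ?_⟩
    calc δ / 2 ≤ ∑ k ∈ Finset.range N, a i k - ∑' k, c k := by linarith
      _ ≤ ∑ k ∈ Finset.range N, a i k - ∑ k ∈ Finset.range N, c k :=
          sub_le_sub_left (hcs.sum_le_tsum _ fun k _ => hc0 k) _
      _ ≤ ∑ k ∈ Finset.range N, |a i k - c k| := by
          rw [← Finset.sum_sub_distrib]; exact Finset.sum_le_sum fun k _ => le_abs_self _
  · have ha_le : ∀ k, a i k ≤ 1 := fun k => le_hasSum (ha1 i) k fun j _ => ha0 i j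
    calc |a i k - c k| • e k = |f i ⊓ (2 : ℝ) • e k - x ⊓ (2 : ℝ) • e k| := by
          rw [inf_two_smul_eq_of_hasSum he hdisj (ha0 i) ha_le (haf i) k, hxc k, ← sub_smul,
            abs_smul_of_nonneg (he k)]
      _ ≤ |f i - x| := abs_inf_sub_inf_le_abs _ _ _
      _ ≤ b := hi

variable [CompleteSpace X]

lemma mem_sigmaConvexHull_of_orderTendsto (he : ∀ k, 0 ≤ e k)
    (hdisj : Pairwise fun j k => e j ⊓ e k = 0) {M : ℝ} (hM : ∀ k, ‖e k‖ ≤ M)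
    (g : X →L[ℝ] ℝ) {ε : ℝ} (hε : 0 < ε) (hge : ∀ k, ε ≤ g (e k))
    (hf : ∀ i, f i ∈ sigmaConvexHull e) (h : OrderTendsto f l x) : x ∈ sigmaConvexHull e := by
  choose a ha0 ha1 haf using hf
  have ha_le : ∀ i k, a i k ≤ 1 := fun i k => le_hasSum (ha1 i) k fun j _ => ha0 i j
  have he0 : ∀ k, e k ≠ 0 := fun k hk => by
    have := hge k
    rw [hk, map_zero] at this
    linarith
  choose c hc hxc using exists_tendsto_coeff_of_orderTendsto he hdisj he0 ha0 ha_le haf h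
  have hc0 : ∀ k, 0 ≤ c k := fun k => ge_of_tendsto (hc k) (.of_forall fun i => ha0 i k)
  have hc_le : ∀ k, c k ≤ 1 := fun k => le_of_tendsto (hc k) (.of_forall fun i => ha_le i k)
  have hcsum : ∀ n, ∑ k ∈ Finset.range n, c k ≤ 1 := fun n =>
    le_of_tendsto (tendsto_finsetSum _ fun k _ => hc k)
      (.of_forall fun i => sum_le_hasSum _ (fun k _ => ha0 i k) (ha1 i))
  have hcs : Summable c := summable_of_sum_range_le hc0 hcsum
  obtain ⟨y, hy⟩ : Summable fun k => c k • e k := .of_norm_bounded (hcs.mul_right M) fun k => by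
    rw [norm_smul, Real.norm_of_nonneg (hc0 k)]
    exact mul_le_mul_of_nonneg_left (hM k) (hc0 k)
  refine ⟨c, hc0, hasSum_one_of_orderTendsto he hdisj g hε hge ha0 ha1 haf h hc hxc hc0 hcs
    (hcs.tsum_le_of_sum_range_le hcsum), ?_⟩
  rwa [eq_of_orderTendsto_of_inf_two_smul_eq he hdisj ha0 haf h hc0 hc_le hxc hy]

lemma isOrderClosed_sigmaConvexHull (he : ∀ k, 0 ≤ e k)
    (hdisj : Pairwise fun j k => e j ⊓ e k = 0) {M : ℝ} (hM : ∀ k, ‖e k‖ ≤ M)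
    (g : X →L[ℝ] ℝ) {ε : ℝ} (hε : 0 < ε) (hge : ∀ k, ε ≤ g (e k)) :
    IsOrderClosed (sigmaConvexHull e) := by
  rintro x ⟨D, f, hf, hfx⟩
  exact mem_sigmaConvexHull_of_orderTendsto he hdisj hM g hε hge hf hfx.orderTendsto

lemma not_frequently_le_apply_of_propP4 (hP4 : PropP4 X) {f : ℕ → X} (hf0 : ∀ n, 0 ≤ f n)
    {M : ℝ} (hM : ∀ n, ‖f n‖ ≤ M) (hdisj : Pairwise fun m n => f m ⊓ f n = 0)
    (hnull : ∀ g : X →L[ℝ] ℝ, InOCDual g → Tendsto (fun n => g (f n)) atTop (𝓝 0))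
    (g : X →L[ℝ] ℝ) {ε : ℝ} (hε : 0 < ε) : ¬ ∃ᶠ n in atTop, ε ≤ g (f n) := by
  intro hfreq
  obtain ⟨φ, hφ, hge⟩ := extraction_of_frequently_atTop hfreq
  have he : ∀ k, 0 ≤ f (φ k) := fun k => hf0 _
  have hdisjφ : Pairwise fun j k => f (φ j) ⊓ f (φ k) = 0 := fun _ _ hjk =>
    hdisj (hφ.injective.ne hjk)
  have hmem : (0 : X) ∈ AbsSigmaSeqClosure (sigmaConvexHull (f ∘ φ)) :=
    ⟨f ∘ φ, self_mem_sigmaConvexHull _, fun g' hg' => by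
      simpa [Function.comp_def, abs_of_nonneg (he _)] using
        (hnull g' hg').comp hφ.tendsto_atTop⟩
  have h0 := hP4 _ (convex_sigmaConvexHull _)
    ⟨M, fun _ hx => norm_le_of_mem_sigmaConvexHull (fun k => hM _) hx⟩
    (isOrderClosed_sigmaConvexHull he hdisjφ (fun k => hM _) g hε hge) hmem
  have := le_apply_of_mem_sigmaConvexHull g hge h0
  rw [map_zero] at this
  linarith

end OrderClosed

variable {X}
/-- property `P4` implies the disjoint order continuity property. -/
theorem stmt16 {X : Type*} [NormedAddCommGroup X] [Lattice X] [HasSolidNorm X] [IsOrderedAddMonoid X] [NormedSpace ℝ X] [CompleteSpace X]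
    (hP4 : PropP4 X) : DOCP X := by
  intro f hf0 ⟨M, hM⟩ hdisj hnull g
  by_contra hg
  obtain ⟨ε, hε, hfreq⟩ : ∃ ε > 0, ∃ᶠ n in atTop, ε ≤ |g (f n)| := by
    simpa [Metric.tendsto_nhds, Real.dist_eq, frequently_atTop] using hg
  have key := not_frequently_le_apply_of_propP4 hP4 hf0 hM (fun m n h => hdisj m n h) hnull
  rcases frequently_or_distrib.1 (hfreq.mono fun n hn => le_abs.1 hn) with h | h
  · exact key g hε h
  · exact key (-g) hε (by simpa using h)
end
end

section
/- In the Cesàro function space Ces_∞[0,1] there exists a norm bounded disjoint sequence (f_n) of nonnegative functions such that f_n → 0 in the topology σ(X, X_n^~) (equivalently ∫₀¹ f_n g → 0 for every decreasing g ∈ L¹[0,1]) but (f_n) is equivalent to the unit vector basis of ℓ¹; hence Ces_∞[0,1] fails the disjoint order continuity property. -/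
open MeasureTheory Filter Topology Set

noncomputable section Stmt18Aux

/-- partition points inside `JJ m` -/
def AA (m n : ℕ) : ℝ := 1/((m:ℝ)+2) + (n:ℝ)/(((m:ℝ)+1)^2*((m:ℝ)+2))

/-- the interval `(1/(m+2), 1/(m+1)]` -/
def JJ (m : ℕ) : Set ℝ := Set.Ioc (1/((m:ℝ)+2)) (1/((m:ℝ)+1))

/-- the sub-piece of `JJ m` assigned to `f n` -/
def II (m n : ℕ) : Set ℝ := Set.Ioc (AA m n) (AA m (n+1))

/-- height of `f n` on `II m n` -/
def HH (m : ℕ) : ℝ := ((m:ℝ)+1)^2/((m:ℝ)+3)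

/-- the sequence of functions -/
def ff (n : ℕ) (t : ℝ) : ℝ :=
  ∑' j : ℕ, Set.indicator (II (n+j) n) (fun _ => HH (n+j)) t

lemma m2pos (m : ℕ) : (0:ℝ) < (m:ℝ)+2 := by positivity
lemma m1pos (m : ℕ) : (0:ℝ) < (m:ℝ)+1 := by positivity

lemma AA_lt (m n : ℕ) : AA m n < AA m (n+1) := by
  unfold AA
  have h1 : (0:ℝ) < ((m:ℝ)+1)^2*((m:ℝ)+2) := by positivity
  have : ((n:ℝ)) < ((n:ℝ)+1) := by linarith
  push_cast
  gcongr

lemma AA_mono (m : ℕ) : StrictMono (AA m) :=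
  strictMono_nat_of_lt_succ (AA_lt m)

lemma AA_zero (m : ℕ) : AA m 0 = 1/((m:ℝ)+2) := by simp [AA]

lemma AA_last (m : ℕ) : AA m (m+1) = 1/((m:ℝ)+1) := by
  unfold AA
  have h1 : ((m:ℝ)+1) ≠ 0 := by positivity
  have h2 : ((m:ℝ)+2) ≠ 0 := by positivity
  field_simp
  push_cast
  ring

lemma AA_diff (m n : ℕ) : AA m (n+1) - AA m n = 1/(((m:ℝ)+1)^2*((m:ℝ)+2)) := by
  unfold AA
  push_cast
  ring

lemma II_subset_JJ {m n : ℕ} (h : n ≤ m) : II m n ⊆ JJ m := by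
  intro t ht
  refine ⟨lt_of_le_of_lt ?_ ht.1, le_trans ht.2 ?_⟩
  · rw [← AA_zero]; exact (AA_mono m).monotone (Nat.zero_le n)
  · rw [← AA_last]; exact (AA_mono m).monotone (by omega)

lemma JJ_disj {m m' : ℕ} (h : m < m') (t : ℝ) (ht : t ∈ JJ m) (ht' : t ∈ JJ m') : False := by
  have h1 : 1/((m':ℝ)+1) ≤ 1/((m:ℝ)+2) := by
    apply one_div_le_one_div_of_le (m2pos m)
    have : (m:ℝ)+1 ≤ (m':ℝ) := by exact_mod_cast Nat.succ_le_of_lt h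
    linarith
  exact absurd (ht'.2.trans h1) (not_le.mpr ht.1)

lemma JJ_eq_of_mem {m m' : ℕ} (t : ℝ) (ht : t ∈ JJ m) (ht' : t ∈ JJ m') : m = m' := by
  rcases lt_trichotomy m m' with h | h | h
  · exact absurd (JJ_disj h t ht ht') (by simp)
  · exact h
  · exact absurd (JJ_disj h t ht' ht) (by simp)

lemma II_eq_of_mem {m n m' n' : ℕ} (hn : n ≤ m) (hn' : n' ≤ m') (t : ℝ)
    (ht : t ∈ II m n) (ht' : t ∈ II m' n') : m = m' ∧ n = n' := by
  have hm : m = m' := JJ_eq_of_mem t (II_subset_JJ hn ht) (II_subset_JJ hn' ht')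
  subst hm
  refine ⟨rfl, ?_⟩
  by_contra hne
  rcases lt_or_gt_of_ne hne with h | h
  · have : AA m (n+1) ≤ AA m n' := (AA_mono m).monotone h
    exact absurd (ht.2.trans this) (not_le.mpr ht'.1)
  · have : AA m (n'+1) ≤ AA m n := (AA_mono m).monotone h
    exact absurd (ht'.2.trans this) (not_le.mpr ht.1)

lemma HH_nonneg (m : ℕ) : 0 ≤ HH m := by unfold HH; positivity

lemma ff_eval {m n : ℕ} (h : n ≤ m) {t : ℝ} (ht : t ∈ II m n) : ff n t = HH m := by
  unfold ff
  have hkey : ∀ j : ℕ, j ≠ m - n →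
      Set.indicator (II (n+j) n) (fun _ => HH (n+j)) t = 0 := by
    intro j hj
    apply Set.indicator_of_notMem
    intro htj
    have := II_eq_of_mem (Nat.le_add_right n j) h t htj ht
    omega
  rw [tsum_eq_single (m - n) hkey]
  have hm : n + (m - n) = m := by omega
  rw [hm, Set.indicator_of_mem ht]

lemma ff_eq_zero {n : ℕ} {t : ℝ} (h : ∀ m, n ≤ m → t ∉ II m n) : ff n t = 0 := by
  unfold ff
  have : ∀ j : ℕ, Set.indicator (II (n+j) n) (fun _ => HH (n+j)) t = 0 := fun j =>
    Set.indicator_of_notMem (h (n+j) (Nat.le_add_right n j)) _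
  simp [this]

lemma ff_ne_zero {n : ℕ} {t : ℝ} (h : ff n t ≠ 0) : ∃ m, n ≤ m ∧ t ∈ II m n := by
  by_contra hc
  push_neg at hc
  exact h (ff_eq_zero fun m hm => hc m hm)

lemma ff_nonneg (n : ℕ) (t : ℝ) : 0 ≤ ff n t := by
  apply tsum_nonneg
  intro j
  exact Set.indicator_nonneg (fun _ _ => HH_nonneg _) t

lemma ff_measurable (n : ℕ) : Measurable (ff n) := by
  have hmeas : ∀ k : ℕ, Measurable (fun t =>
      ∑ j ∈ Finset.range k, Set.indicator (II (n+j) n) (fun _ => HH (n+j)) t) := by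
    intro k
    apply Finset.measurable_sum
    intro j _
    exact (measurable_const.indicator measurableSet_Ioc)
  apply measurable_of_tendsto_metrizable hmeas
  rw [tendsto_pi_nhds]
  intro t
  have hsum : Summable (fun j => Set.indicator (II (n+j) n) (fun _ => HH (n+j)) t) := by
    by_cases hex : ∃ j₀, t ∈ II (n+j₀) n
    · obtain ⟨j₀, hj₀⟩ := hex
      apply summable_of_ne_finset_zero (s := {j₀})
      intro j hj
      simp only [Finset.mem_singleton] at hj
      apply Set.indicator_of_notMem
      intro htj
      have := II_eq_of_mem (Nat.le_add_right n j) (Nat.le_add_right n j₀) t htj hj₀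
      omega
    · push_neg at hex
      apply summable_of_ne_finset_zero (s := ∅)
      intro j _
      exact Set.indicator_of_notMem (hex j) _
  exact hsum.hasSum.tendsto_sum_nat

lemma JJ_exists {N : ℕ} {t : ℝ} (ht : t ∈ Set.Ioc (0:ℝ) (1/((N:ℝ)+1))) :
    ∃ j, t ∈ JJ (N + j) := by
  obtain ⟨ht0, ht1⟩ := ht
  have hex : ∃ m : ℕ, 1/((m:ℝ)+2) < t := by
    obtain ⟨m, hm⟩ := exists_nat_gt (1/t)
    refine ⟨m, ?_⟩
    rw [div_lt_iff₀ ht0] at hm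
    rw [div_lt_iff₀ (by positivity)]
    nlinarith
  classical
  set m₀ := Nat.find hex with hm₀
  have h1 : 1/((m₀:ℝ)+2) < t := Nat.find_spec hex
  have h2 : t ≤ 1/((m₀:ℝ)+1) := by
    rcases Nat.eq_zero_or_pos m₀ with h | h
    · rw [h]; push_cast
      refine ht1.trans ?_
      rw [div_le_div_iff₀ (by positivity) (by norm_num)]
      linarith [Nat.cast_nonneg (α := ℝ) N]
    · have := Nat.find_min hex (m := m₀ - 1) (by omega)
      push_neg at this
      have he : ((m₀:ℝ) - 1) + 2 = (m₀:ℝ) + 1 := by ring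
      rw [Nat.cast_sub (by omega)] at this
      push_cast at this
      rw [he] at this
      exact this
  have hge : N ≤ m₀ := by
    by_contra hlt
    push_neg at hlt
    have : 1/((N:ℝ)+1) ≤ 1/((m₀:ℝ)+2) := by
      apply one_div_le_one_div_of_le (by positivity)
      have : (m₀:ℝ)+1 ≤ (N:ℝ) := by exact_mod_cast hlt
      linarith
    linarith
  exact ⟨m₀ - N, by rw [Nat.add_sub_cancel' hge]; exact ⟨h1, h2⟩⟩

lemma JJ_union (N : ℕ) : (⋃ j, JJ (N + j)) = Set.Ioc (0:ℝ) (1/((N:ℝ)+1)) := by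
  apply Set.Subset.antisymm
  · intro t ht
    obtain ⟨j, hj⟩ := Set.mem_iUnion.mp ht
    refine ⟨lt_trans (by positivity) hj.1, hj.2.trans ?_⟩
    apply one_div_le_one_div_of_le (by positivity)
    push_cast; linarith [Nat.cast_nonneg (α := ℝ) j]
  · intro t ht
    exact Set.mem_iUnion.mpr (JJ_exists ht)

lemma JJ_measurable (m : ℕ) : MeasurableSet (JJ m) := measurableSet_Ioc

lemma II_measurable (m n : ℕ) : MeasurableSet (II m n) := measurableSet_Ioc

lemma JJ_pairwise (N : ℕ) : Pairwise (Function.onFun Disjoint (fun j => JJ (N + j))) := by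
  intro i j hij
  simp only [Function.onFun]
  rw [Set.disjoint_left]
  intro t hti htj
  have := JJ_eq_of_mem t hti htj
  omega

lemma ff_on_JJ_le {m n : ℕ} (h : n ≤ m) {t : ℝ} (ht : t ∈ JJ m) :
    ff n t = Set.indicator (II m n) (fun _ => HH m) t := by
  by_cases htI : t ∈ II m n
  · rw [ff_eval h htI, Set.indicator_of_mem htI]
  · rw [Set.indicator_of_notMem htI]
    apply ff_eq_zero
    intro m' hm' htm'
    have : m' = m := JJ_eq_of_mem t (II_subset_JJ hm' htm') ht
    exact htI (this ▸ htm')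

lemma ff_on_JJ_gt {m n : ℕ} (h : m < n) {t : ℝ} (ht : t ∈ JJ m) : ff n t = 0 := by
  apply ff_eq_zero
  intro m' hm' htm'
  have : m' = m := JJ_eq_of_mem t (II_subset_JJ hm' htm') ht
  omega

lemma ff_zero_outside {n : ℕ} {t : ℝ} (ht : t ∉ Set.Ioc (0:ℝ) (1/((n:ℝ)+1))) :
    ff n t = 0 := by
  apply ff_eq_zero
  intro m hm htm
  apply ht
  have htJ := II_subset_JJ hm htm
  refine ⟨lt_trans (by positivity) htJ.1, htJ.2.trans ?_⟩
  apply one_div_le_one_div_of_le (by positivity)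
  have : (n:ℝ) ≤ (m:ℝ) := by exact_mod_cast hm
  linarith

/-- the common mass of each piece -/
def mu (m : ℕ) : ℝ := 1/(((m:ℝ)+2)*((m:ℝ)+3))

lemma mu_nonneg (m : ℕ) : 0 ≤ mu m := by unfold mu; positivity

lemma lint_JJ {m n : ℕ} (h : n ≤ m) :
    ∫⁻ t in JJ m, ENNReal.ofReal (ff n t) = ENNReal.ofReal (mu m) := by
  have hcong : ∀ t ∈ JJ m, ENNReal.ofReal (ff n t)
      = Set.indicator (II m n) (fun _ => ENNReal.ofReal (HH m)) t := by
    intro t ht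
    rw [ff_on_JJ_le h ht]
    by_cases htI : t ∈ II m n
    · rw [Set.indicator_of_mem htI, Set.indicator_of_mem htI]
    · rw [Set.indicator_of_notMem htI, Set.indicator_of_notMem htI, ENNReal.ofReal_zero]
  rw [setLIntegral_congr_fun (JJ_measurable m) hcong]
  rw [lintegral_indicator (II_measurable m n)]
  rw [Measure.restrict_restrict (II_measurable m n)]
  rw [Set.inter_eq_self_of_subset_left (II_subset_JJ h)]
  rw [setLIntegral_const]
  rw [show II m n = Set.Ioc (AA m n) (AA m (n+1)) from rfl, Real.volume_Ioc, AA_diff]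
  rw [← ENNReal.ofReal_mul (HH_nonneg m)]
  congr 1
  unfold HH mu
  have h1 : ((m:ℝ)+1) ≠ 0 := by positivity
  have h2 : ((m:ℝ)+2) ≠ 0 := by positivity
  have h3 : ((m:ℝ)+3) ≠ 0 := by positivity
  field_simp

lemma lint_JJ_gt {m n : ℕ} (h : m < n) :
    ∫⁻ t in JJ m, ENNReal.ofReal (ff n t) = 0 := by
  have hcong : ∀ t ∈ JJ m, ENNReal.ofReal (ff n t) = 0 := by
    intro t ht
    rw [ff_on_JJ_gt h ht, ENNReal.ofReal_zero]
  rw [setLIntegral_congr_fun (JJ_measurable m) hcong]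
  simp

lemma sum_mu (M k : ℕ) :
    ∑ j ∈ Finset.range k, mu (M + j) = 1/((M:ℝ)+2) - 1/((M:ℝ)+(k:ℝ)+2) := by
  induction k with
  | zero => simp
  | succ k ih =>
    rw [Finset.sum_range_succ, ih]
    have h1 : ((M:ℝ)+(k:ℝ)+2) ≠ 0 := by positivity
    have h2 : ((M:ℝ)+((k:ℝ)+1)+2) ≠ 0 := by positivity
    unfold mu
    push_cast
    field_simp
    ring

lemma hasSum_mu (M : ℕ) : HasSum (fun j => mu (M + j)) (1/((M:ℝ)+2)) := by
  rw [hasSum_iff_tendsto_nat_of_nonneg (fun j => mu_nonneg (M + j))]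
  have : (fun k => ∑ j ∈ Finset.range k, mu (M + j))
      = fun k : ℕ => 1/((M:ℝ)+2) - 1/((M:ℝ)+(k:ℝ)+2) := by
    funext k; exact sum_mu M k
  rw [this]
  have h1 : Tendsto (fun k : ℕ => (M:ℝ)+(k:ℝ)+2) atTop atTop := by
    apply tendsto_atTop_add_const_right
    exact tendsto_atTop_add_const_left _ _ tendsto_natCast_atTop_atTop
  have htend : Tendsto (fun k : ℕ => 1/((M:ℝ)+(k:ℝ)+2)) atTop (𝓝 0) := by
    simpa only [one_div, Pi.inv_def] using h1.inv_tendsto_atTop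
  simpa using tendsto_const_nhds.sub htend

lemma lint_tail' {N n : ℕ} (h : n ≤ N) :
    ∫⁻ t in Set.Ioc (0:ℝ) (1/((N:ℝ)+1)), ENNReal.ofReal (ff n t)
      = ENNReal.ofReal (1/((N:ℝ)+2)) := by
  rw [← JJ_union N, lintegral_iUnion (fun j => JJ_measurable _) (JJ_pairwise N)]
  have hterm : ∀ j : ℕ, (∫⁻ t in JJ (N + j), ENNReal.ofReal (ff n t))
      = ENNReal.ofReal (mu (N + j)) := fun j => lint_JJ (by omega)
  simp only [hterm]
  rw [← ENNReal.ofReal_tsum_of_nonneg (fun j => mu_nonneg (N + j)) (hasSum_mu N).summable]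
  rw [(hasSum_mu N).tsum_eq]

lemma lint_tail (N n : ℕ) :
    ∫⁻ t in Set.Ioc (0:ℝ) (1/((N:ℝ)+1)), ENNReal.ofReal (ff n t)
      = ENNReal.ofReal (1/(((max N n : ℕ):ℝ)+2)) := by
  rcases le_or_gt n N with h | h
  · rw [Nat.max_eq_left h]
    exact lint_tail' h
  · rw [Nat.max_eq_right h.le]
    have hM : (1:ℝ)/((n:ℝ)+1) ≤ 1/((N:ℝ)+1) := by
      apply one_div_le_one_div_of_le (by positivity)
      have : (N:ℝ) ≤ (n:ℝ) := by exact_mod_cast h.le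
      linarith
    have hsplit : Set.Ioc (0:ℝ) (1/((N:ℝ)+1))
        = Set.Ioc (0:ℝ) (1/((n:ℝ)+1)) ∪ Set.Ioc (1/((n:ℝ)+1)) (1/((N:ℝ)+1)) := by
      rw [Set.Ioc_union_Ioc_eq_Ioc (by positivity) hM]
    rw [hsplit, lintegral_union measurableSet_Ioc
      ((Set.Ioc_disjoint_Ioc_of_le le_rfl))]
    have hzero : ∫⁻ t in Set.Ioc (1/((n:ℝ)+1)) (1/((N:ℝ)+1)), ENNReal.ofReal (ff n t) = 0 := by
      have hcong : ∀ t ∈ Set.Ioc (1/((n:ℝ)+1)) (1/((N:ℝ)+1)),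
          ENNReal.ofReal (ff n t) = 0 := by
        intro t ht
        rw [ff_zero_outside (fun hmem => absurd hmem.2 (not_le.mpr ht.1)), ENNReal.ofReal_zero]
      rw [setLIntegral_congr_fun measurableSet_Ioc hcong]
      simp
    rw [hzero, add_zero, lint_tail' le_rfl]

lemma integrableOn_ff_tail (N n : ℕ) :
    IntegrableOn (ff n) (Set.Ioc (0:ℝ) (1/((N:ℝ)+1))) := by
  constructor
  · exact (ff_measurable n).aestronglyMeasurable
  · rw [hasFiniteIntegral_iff_norm]
    have : ∀ t : ℝ, ENNReal.ofReal ‖ff n t‖ = ENNReal.ofReal (ff n t) := by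
      intro t
      rw [Real.norm_of_nonneg (ff_nonneg n t)]
    simp only [this]
    rw [lint_tail N n]
    exact ENNReal.ofReal_lt_top

lemma integral_ff_tail (N n : ℕ) :
    ∫ t in Set.Ioc (0:ℝ) (1/((N:ℝ)+1)), ff n t = 1/(((max N n : ℕ):ℝ)+2) := by
  rw [integral_eq_lintegral_of_nonneg_ae (Filter.Eventually.of_forall (fun t => ff_nonneg n t))
    (ff_measurable n).aestronglyMeasurable]
  rw [lint_tail N n]
  rw [ENNReal.toReal_ofReal (by positivity)]

lemma ff_pt_disj {k k' : ℕ} (h : k ≠ k') (t : ℝ) : ff k t = 0 ∨ ff k' t = 0 := by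
  by_contra hc
  push_neg at hc
  obtain ⟨m₁, hm₁, ht₁⟩ := ff_ne_zero hc.1
  obtain ⟨m₂, hm₂, ht₂⟩ := ff_ne_zero hc.2
  exact h (II_eq_of_mem hm₁ hm₂ t ht₁ ht₂).2

lemma one_div_zero_add : (1:ℝ)/(((0:ℕ):ℝ)+1) = 1 := by norm_num

lemma integrableOn_ff_Ioc01 (n : ℕ) : IntegrableOn (ff n) (Set.Ioc (0:ℝ) 1) := by
  have := integrableOn_ff_tail 0 n
  rwa [one_div_zero_add] at this

lemma setLIntegral_mono_on {s : Set ℝ} (hs : MeasurableSet s) {f g : ℝ → ENNReal}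
    (h : ∀ t ∈ s, f t ≤ g t) : ∫⁻ t in s, f t ≤ ∫⁻ t in s, g t := by
  rw [← lintegral_indicator hs, ← lintegral_indicator hs]
  apply lintegral_mono
  intro t
  by_cases hts : t ∈ s
  · simpa [Set.indicator_of_mem hts] using h t hts
  · simp [Set.indicator_of_notMem hts]

lemma JJ_subset_Ioc01 (m : ℕ) : JJ m ⊆ Set.Ioc (0:ℝ) 1 := by
  intro t ht
  refine ⟨lt_trans (by positivity) ht.1, ht.2.trans ?_⟩
  rw [div_le_one (by positivity)]
  linarith [Nat.cast_nonneg (α := ℝ) m]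

lemma AA_mem_Ioc01 {m n : ℕ} (h : n ≤ m) : AA m n ∈ Set.Ioc (0:ℝ) 1 := by
  constructor
  · unfold AA; positivity
  · have h1 : AA m n ≤ AA m (m+1) := (AA_mono m).monotone (by omega)
    rw [AA_last] at h1
    refine h1.trans ?_
    rw [div_le_one (by positivity)]
    linarith [Nat.cast_nonneg (α := ℝ) m]

lemma HH_mul_mu (m : ℕ) : HH m * (1/(((m:ℝ)+1)^2*((m:ℝ)+2))) = mu m := by
  unfold HH mu
  have h1 : ((m:ℝ)+1) ≠ 0 := by positivity
  have h2 : ((m:ℝ)+2) ≠ 0 := by positivity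
  have h3 : ((m:ℝ)+3) ≠ 0 := by positivity
  field_simp

lemma volume_JJ (m : ℕ) : volume (JJ (m+1)) = ENNReal.ofReal (mu m) := by
  rw [show JJ (m+1) = Set.Ioc (1/(((m+1:ℕ):ℝ)+2)) (1/(((m+1:ℕ):ℝ)+1)) from rfl,
    Real.volume_Ioc]
  congr 1
  have h2 : ((m:ℝ)+2) ≠ 0 := by positivity
  have h3 : ((m:ℝ)+3) ≠ 0 := by positivity
  unfold mu
  push_cast
  field_simp
  ring

lemma lint_JJ_fG {m n : ℕ} (h : n ≤ m) {G : ℝ → ℝ} (hanti : AntitoneOn G (Set.Ioc 0 1)) :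
    ∫⁻ t in JJ m, ENNReal.ofReal (ff n t * G t)
      ≤ ∫⁻ t in JJ (m+1), ENNReal.ofReal (G t) := by
  set C := ENNReal.ofReal (G (AA m n)) with hC
  have hAmem : AA m n ∈ Set.Ioc (0:ℝ) 1 := AA_mem_Ioc01 h
  have step1 : ∫⁻ t in JJ m, ENNReal.ofReal (ff n t * G t)
      ≤ ∫⁻ t in JJ m, Set.indicator (II m n) (fun _ => ENNReal.ofReal (HH m) * C) t := by
    apply setLIntegral_mono_on (JJ_measurable m)
    intro t ht
    by_cases htI : t ∈ II m n
    · rw [Set.indicator_of_mem htI, ff_eval h htI]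
      have htmem : t ∈ Set.Ioc (0:ℝ) 1 := JJ_subset_Ioc01 m ht
      have hGle : G t ≤ G (AA m n) := hanti hAmem htmem (le_of_lt htI.1)
      calc ENNReal.ofReal (HH m * G t)
          ≤ ENNReal.ofReal (HH m * G (AA m n)) := by
            apply ENNReal.ofReal_le_ofReal
            exact mul_le_mul_of_nonneg_left hGle (HH_nonneg m)
        _ = ENNReal.ofReal (HH m) * C := ENNReal.ofReal_mul (HH_nonneg m)
    · rw [Set.indicator_of_notMem htI, ff_on_JJ_le h ht, Set.indicator_of_notMem htI,
        zero_mul, ENNReal.ofReal_zero]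
  have step2 : ∫⁻ t in JJ m, Set.indicator (II m n) (fun _ => ENNReal.ofReal (HH m) * C) t
      = ENNReal.ofReal (mu m) * C := by
    rw [lintegral_indicator (II_measurable m n), Measure.restrict_restrict (II_measurable m n),
      Set.inter_eq_self_of_subset_left (II_subset_JJ h), setLIntegral_const,
      show II m n = Set.Ioc (AA m n) (AA m (n+1)) from rfl, Real.volume_Ioc, AA_diff]
    rw [mul_right_comm, ← ENNReal.ofReal_mul (HH_nonneg m), HH_mul_mu]
  have step3 : ENNReal.ofReal (mu m) * C ≤ ∫⁻ t in JJ (m+1), ENNReal.ofReal (G t) := by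
    have hpt : ∀ t ∈ JJ (m+1), C ≤ ENNReal.ofReal (G t) := by
      intro t ht
      apply ENNReal.ofReal_le_ofReal
      apply hanti (JJ_subset_Ioc01 _ ht) hAmem
      calc t ≤ 1/(((m+1:ℕ):ℝ)+1) := ht.2
        _ = 1/((m:ℝ)+2) := by push_cast; ring_nf
        _ = AA m 0 := (AA_zero m).symm
        _ ≤ AA m n := (AA_mono m).monotone (Nat.zero_le n)
    calc ENNReal.ofReal (mu m) * C = ∫⁻ _ in JJ (m+1), C := by
          rw [setLIntegral_const, volume_JJ, mul_comm]
      _ ≤ _ := setLIntegral_mono_on (JJ_measurable _) hpt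
  exact (step1.trans_eq step2).trans step3

lemma lint_fG_total {n : ℕ} {G : ℝ → ℝ} (hanti : AntitoneOn G (Set.Ioc 0 1)) :
    ∫⁻ t in Set.Ioc (0:ℝ) 1, ENNReal.ofReal (ff n t * G t)
      ≤ ∫⁻ t in Set.Ioc (0:ℝ) (1/(((n+1:ℕ):ℝ)+1)), ENNReal.ofReal (G t) := by
  have hle1 : (1:ℝ)/((n:ℝ)+1) ≤ 1 := by
    rw [div_le_one (by positivity)]
    linarith [Nat.cast_nonneg (α := ℝ) n]
  have hsplit : Set.Ioc (0:ℝ) 1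
      = Set.Ioc (0:ℝ) (1/((n:ℝ)+1)) ∪ Set.Ioc (1/((n:ℝ)+1)) 1 := by
    rw [Set.Ioc_union_Ioc_eq_Ioc (by positivity) hle1]
  rw [hsplit, lintegral_union measurableSet_Ioc (Set.Ioc_disjoint_Ioc_of_le le_rfl)]
  have h2 : ∫⁻ t in Set.Ioc (1/((n:ℝ)+1)) 1, ENNReal.ofReal (ff n t * G t) = 0 := by
    have hcong : ∀ t ∈ Set.Ioc (1/((n:ℝ)+1)) 1, ENNReal.ofReal (ff n t * G t) = 0 := by
      intro t ht
      rw [ff_zero_outside (fun hmem => absurd hmem.2 (not_le.mpr ht.1)), zero_mul,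
        ENNReal.ofReal_zero]
    rw [setLIntegral_congr_fun measurableSet_Ioc hcong]
    simp
  rw [h2, add_zero]
  rw [← JJ_union n, lintegral_iUnion (fun j => JJ_measurable _) (JJ_pairwise n)]
  rw [← JJ_union (n+1), lintegral_iUnion (fun j => JJ_measurable _) (JJ_pairwise (n+1))]
  apply ENNReal.tsum_le_tsum
  intro j
  have hidx : (n+1) + j = (n + j) + 1 := by omega
  rw [hidx]
  exact lint_JJ_fG (Nat.le_add_right n j) hanti

lemma hint_ff_Ioc01 (n : ℕ) : ∫ t in Set.Ioc (0:ℝ) 1, ff n t = 1/((n:ℝ)+2) := by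
  have := integral_ff_tail 0 n
  rw [one_div_zero_add] at this
  rw [this, Nat.max_eq_right (Nat.zero_le n)]

lemma one_div_add_two_tendsto : Tendsto (fun n : ℕ => 1/((n:ℝ)+2)) atTop (𝓝 0) := by
  have h1 : Tendsto (fun n : ℕ => (n:ℝ)+2) atTop atTop :=
    tendsto_atTop_add_const_right _ 2 tendsto_natCast_atTop_atTop
  simpa only [one_div, Pi.inv_def] using h1.inv_tendsto_atTop

lemma sigma_null {g : ℝ → ℝ} (hanti : AntitoneOn g (Set.Ioc 0 1))
    (hint : IntegrableOn g (Set.Ioc (0:ℝ) 1)) :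
    Tendsto (fun n => ∫ t in Set.Ioc (0:ℝ) 1, ff n t * g t) atTop (𝓝 0) := by
  set G : ℝ → ℝ := fun t => g t - g 1 with hGdef
  have h1mem : (1:ℝ) ∈ Set.Ioc (0:ℝ) 1 := ⟨one_pos, le_refl 1⟩
  have hGanti : AntitoneOn G (Set.Ioc 0 1) := fun a ha b hb hab => by
    simp only [hGdef]
    have := hanti ha hb hab
    linarith
  have hGnonneg : ∀ t ∈ Set.Ioc (0:ℝ) 1, 0 ≤ G t := fun t ht => by
    simp only [hGdef]
    have := hanti ht h1mem ht.2
    linarith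
  have hvol : volume (Set.Ioc (0:ℝ) 1) < ⊤ := by
    rw [Real.volume_Ioc]; exact ENNReal.ofReal_lt_top
  have hGint : IntegrableOn G (Set.Ioc (0:ℝ) 1) := by
    apply hint.sub
    exact integrableOn_const hvol.ne
  have hBG : ∫⁻ t in Set.Ioc (0:ℝ) 1, ENNReal.ofReal (G t) < ⊤ := by
    have h1 : ∫⁻ t in Set.Ioc (0:ℝ) 1, ENNReal.ofReal (G t)
        ≤ ∫⁻ t in Set.Ioc (0:ℝ) 1, ENNReal.ofReal ‖G t‖ := by
      apply lintegral_mono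
      intro t
      exact ENNReal.ofReal_le_ofReal (le_abs_self _)
    refine lt_of_le_of_lt h1 ?_
    have := hGint.2
    rwa [hasFiniteIntegral_iff_norm] at this
  -- integrability of products
  have hff_int := integrableOn_ff_Ioc01
  have hlint_ff : ∀ n, ∫⁻ t in Set.Ioc (0:ℝ) 1, ENNReal.ofReal (ff n t) < ⊤ := by
    intro n
    have := lint_tail 0 n
    rw [one_div_zero_add] at this
    rw [this]
    exact ENNReal.ofReal_lt_top
  have hfg_int : ∀ n, IntegrableOn (fun t => ff n t * g t) (Set.Ioc (0:ℝ) 1) := by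
    intro n
    constructor
    · exact (ff_measurable n).aestronglyMeasurable.mul hint.1
    · rw [hasFiniteIntegral_iff_norm]
      have hbound : ∀ᵐ t ∂(volume.restrict (Set.Ioc (0:ℝ) 1)),
          ENNReal.ofReal ‖ff n t * g t‖
            ≤ ENNReal.ofReal (ff n t * G t) + ENNReal.ofReal (ff n t * |g 1|) := by
        apply (ae_restrict_iff' measurableSet_Ioc).mpr
        apply Filter.Eventually.of_forall
        intro t ht
        have h1 : ‖ff n t * g t‖ = ff n t * |g t| := by
          rw [norm_mul, Real.norm_of_nonneg (ff_nonneg n t), Real.norm_eq_abs]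
        have h2 : |g t| ≤ G t + |g 1| := by
          have h3 : g t = G t + g 1 := by simp [hGdef]
          rw [h3]
          refine (abs_add_le _ _).trans ?_
          rw [abs_of_nonneg (hGnonneg t ht)]
        calc ENNReal.ofReal ‖ff n t * g t‖
            ≤ ENNReal.ofReal (ff n t * G t + ff n t * |g 1|) := by
              apply ENNReal.ofReal_le_ofReal
              rw [h1, ← mul_add]
              exact mul_le_mul_of_nonneg_left h2 (ff_nonneg n t)
          _ ≤ _ := ENNReal.ofReal_add_le
      refine lt_of_le_of_lt (lintegral_mono_ae hbound) ?_
      have hmeas2 : Measurable fun t => ENNReal.ofReal (ff n t * |g 1|) :=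
        ((ff_measurable n).mul_const _).ennreal_ofReal
      rw [lintegral_add_right _ hmeas2]
      apply ENNReal.add_lt_top.mpr
      constructor
      · exact lt_of_le_of_lt ((lint_fG_total hGanti).trans
          (lintegral_mono_set (Set.Ioc_subset_Ioc_right (by
            rw [div_le_one (by positivity)]
            push_cast
            linarith [Nat.cast_nonneg (α := ℝ) n])))) hBG
      · have hpt : ∀ t, ENNReal.ofReal (ff n t * |g 1|)
            = ENNReal.ofReal (ff n t) * ENNReal.ofReal |g 1| :=
          fun t => ENNReal.ofReal_mul (ff_nonneg n t)
        simp only [hpt]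
        rw [lintegral_mul_const _ (ff_measurable n).ennreal_ofReal]
        exact ENNReal.mul_lt_top (hlint_ff n) ENNReal.ofReal_lt_top
  have hffG_int : ∀ n, IntegrableOn (fun t => ff n t * G t) (Set.Ioc (0:ℝ) 1) := by
    intro n
    have heq : (fun t => ff n t * G t) = fun t => ff n t * g t - g 1 * ff n t := by
      funext t
      simp only [hGdef]
      ring
    rw [heq]
    exact (hfg_int n).sub ((hff_int n).const_mul (g 1))
  have hdecomp : ∀ n, ∫ t in Set.Ioc (0:ℝ) 1, ff n t * g t
      = (∫ t in Set.Ioc (0:ℝ) 1, ff n t * G t) + g 1 * ∫ t in Set.Ioc (0:ℝ) 1, ff n t := by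
    intro n
    rw [← MeasureTheory.integral_const_mul,
      ← integral_add (hffG_int n) ((hff_int n).const_mul (g 1))]
    congr 1
    funext t
    simp only [hGdef]
    ring
  set T : ℕ → ENNReal :=
    fun n => ∫⁻ t in Set.Ioc (0:ℝ) (1/(((n+1:ℕ):ℝ)+1)), ENNReal.ofReal (G t) with hTdef
  have hT_le : ∀ n, T n ≤ ∫⁻ t in Set.Ioc (0:ℝ) 1, ENNReal.ofReal (G t) := by
    intro n
    apply lintegral_mono_set
    apply Set.Ioc_subset_Ioc_right
    rw [div_le_one (by positivity)]
    push_cast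
    linarith [Nat.cast_nonneg (α := ℝ) n]
  have hT_ne : ∀ n, T n ≠ ⊤ := fun n => (lt_of_le_of_lt (hT_le n) hBG).ne
  have hffG_nonneg : ∀ n, 0 ≤ ∫ t in Set.Ioc (0:ℝ) 1, ff n t * G t := by
    intro n
    apply setIntegral_nonneg measurableSet_Ioc
    intro t ht
    exact mul_nonneg (ff_nonneg n t) (hGnonneg t ht)
  have hffG_bound : ∀ n, ∫ t in Set.Ioc (0:ℝ) 1, ff n t * G t ≤ (T n).toReal := by
    intro n
    rw [integral_eq_lintegral_of_nonneg_ae ((ae_restrict_iff' measurableSet_Ioc).mpr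
      (Filter.Eventually.of_forall fun t ht => mul_nonneg (ff_nonneg n t) (hGnonneg t ht)))
      (hffG_int n).1]
    exact ENNReal.toReal_mono (hT_ne n) (lint_fG_total hGanti)
  -- T n tends to 0
  set L : ℕ → ENNReal := fun m => ∫⁻ t in JJ m, ENNReal.ofReal (G t) with hLdef
  have hLtot : ∑' m, L m ≠ ⊤ := by
    have h1 : ∑' m, L m = ∫⁻ t in Set.Ioc (0:ℝ) 1, ENNReal.ofReal (G t) := by
      have h2 := (JJ_union 0).symm
      rw [one_div_zero_add] at h2
      rw [h2, lintegral_iUnion (fun j => JJ_measurable _) (JJ_pairwise 0)]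
      simp only [Nat.zero_add]
      rfl
    rw [h1]
    exact hBG.ne
  have hTeq : ∀ n, T n = ∑' j, L (j + (n+1)) := by
    intro n
    show ∫⁻ t in Set.Ioc (0:ℝ) (1/(((n+1:ℕ):ℝ)+1)), ENNReal.ofReal (G t) = ∑' j, L (j + (n+1))
    have h2 := (JJ_union (n+1)).symm
    rw [h2, lintegral_iUnion (fun j => JJ_measurable _) (JJ_pairwise (n+1))]
    exact tsum_congr fun j => by rw [Nat.add_comm]
  have hTtend : Tendsto (fun n => (T n).toReal) atTop (𝓝 0) := by
    have h1 : Tendsto (fun i => ∑' k, L (k + i)) atTop (𝓝 0) :=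
      ENNReal.tendsto_sum_nat_add L hLtot
    have h2 : Tendsto (fun n : ℕ => T n) atTop (𝓝 0) := by
      have h3 := h1.comp (tendsto_add_atTop_nat 1)
      refine h3.congr fun n => ?_
      simp only [Function.comp]
      exact (hTeq n).symm
    have h4 := (ENNReal.tendsto_toReal (by simp : (0:ENNReal) ≠ ⊤)).comp h2
    simpa [Function.comp_def] using h4
  -- final squeeze
  apply squeeze_zero_norm (a := fun n => (T n).toReal + |g 1| * (1/((n:ℝ)+2)))
  · intro n
    rw [Real.norm_eq_abs, hdecomp n]
    refine (abs_add_le _ _).trans ?_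
    apply add_le_add
    · rw [abs_of_nonneg (hffG_nonneg n)]
      exact hffG_bound n
    · rw [hint_ff_Ioc01 n, abs_mul, abs_of_nonneg (by positivity : (0:ℝ) ≤ 1/((n:ℝ)+2))]
  · have := hTtend.add ((one_div_add_two_tendsto).const_mul |g 1|)
    simpa using this

lemma abs_sum_eq (m : ℕ) (a : ℕ → ℝ) (t : ℝ) :
    |∑ k ∈ Finset.range m, a k * ff k t| = ∑ k ∈ Finset.range m, |a k| * ff k t := by
  by_cases hall : ∀ k ∈ Finset.range m, ff k t = 0
  · rw [Finset.sum_eq_zero (fun k hk => by rw [hall k hk, mul_zero]),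
      Finset.sum_eq_zero (fun k hk => by rw [hall k hk, mul_zero]), abs_zero]
  · push_neg at hall
    obtain ⟨k₀, hk₀mem, hk₀⟩ := hall
    have hothers : ∀ k ∈ Finset.range m, k ≠ k₀ → ff k t = 0 := by
      intro k _ hne
      rcases ff_pt_disj hne t with h | h
      · exact h
      · exact absurd h hk₀
    rw [Finset.sum_eq_single_of_mem k₀ hk₀mem
        (fun b hb hbne => by rw [hothers b hb hbne, mul_zero]),
      Finset.sum_eq_single_of_mem k₀ hk₀mem
        (fun b hb hbne => by rw [hothers b hb hbne, mul_zero]),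
      abs_mul, abs_of_nonneg (ff_nonneg k₀ t)]

end Stmt18Aux

/-- in the Cesàro function space `Ces_∞[0,1]` there is a norm bounded
disjoint sequence of nonnegative functions which is `σ(X, X_n^~)`-null (i.e.
`∫₀¹ fₙ g → 0` for every decreasing integrable `g`) yet equivalent to the unit
vector basis of `ℓ¹`; hence `Ces_∞[0,1]` fails the disjoint order continuity
property. -/
theorem stmt18 :
    ∃ f : ℕ → ℝ → ℝ,
      (∀ n, Measurable (f n)) ∧
      (∀ n t, 0 ≤ f n t) ∧
      (∀ n t, t ∉ Set.Ioc (0 : ℝ) 1 → f n t = 0) ∧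
      (∀ n, IntegrableOn (f n) (Set.Ioc (0 : ℝ) 1)) ∧
      (∀ n m, n ≠ m → ∀ t, min (f n t) (f m t) = 0) ∧
      (∃ M : ℝ, ∀ n, ∀ x ∈ Set.Ioc (0 : ℝ) 1,
        (1 / x) * ∫ t in Set.Ioc (0 : ℝ) x, f n t ≤ M) ∧
      (∀ g : ℝ → ℝ, AntitoneOn g (Set.Ioc (0 : ℝ) 1) →
        IntegrableOn g (Set.Ioc (0 : ℝ) 1) →
        Tendsto (fun n => ∫ t in Set.Ioc (0 : ℝ) 1, f n t * g t) atTop (𝓝 0)) ∧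
      (∃ c : ℝ, 0 < c ∧ ∀ (m : ℕ) (a : ℕ → ℝ), ∃ x ∈ Set.Ioc (0 : ℝ) 1,
        c * ∑ k ∈ Finset.range m, |a k| ≤
          (1 / x) * ∫ t in Set.Ioc (0 : ℝ) x, |∑ k ∈ Finset.range m, a k * f k t|) := by
  refine ⟨ff, ff_measurable, ff_nonneg, ?_, integrableOn_ff_Ioc01, ?_, ?_, ?_, ?_⟩
  · -- vanishing outside (0,1]
    intro n t ht
    apply ff_zero_outside
    intro hmem
    apply ht
    refine ⟨hmem.1, hmem.2.trans ?_⟩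
    rw [div_le_one (by positivity)]
    linarith [Nat.cast_nonneg (α := ℝ) n]
  · -- disjointness
    intro n m hnm t
    rcases ff_pt_disj hnm t with h | h
    · rw [h]
      exact min_eq_left (ff_nonneg m t)
    · rw [h]
      exact min_eq_right (ff_nonneg n t)
  · -- norm bound
    refine ⟨1, fun n x hx => ?_⟩
    have hx' : x ∈ Set.Ioc (0:ℝ) (1/(((0:ℕ):ℝ)+1)) := by
      rw [one_div_zero_add]; exact hx
    obtain ⟨m, hm⟩ := JJ_exists hx'
    rw [Nat.zero_add] at hm
    have hIle : ∫ t in Set.Ioc (0:ℝ) x, ff n t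
        ≤ ∫ t in Set.Ioc (0:ℝ) (1/((m:ℝ)+1)), ff n t := by
      apply setIntegral_mono_set (integrableOn_ff_tail m n)
        ((ae_restrict_iff' measurableSet_Ioc).mpr
          (Filter.Eventually.of_forall (fun t _ => ff_nonneg n t)))
      exact HasSubset.Subset.eventuallyLE (Set.Ioc_subset_Ioc_right hm.2)
    have h2 : ∫ t in Set.Ioc (0:ℝ) (1/((m:ℝ)+1)), ff n t ≤ x := by
      rw [integral_ff_tail m n]
      have h3 : 1/(((max m n:ℕ):ℝ)+2) ≤ 1/((m:ℝ)+2) := by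
        apply one_div_le_one_div_of_le (by positivity)
        have : (m:ℝ) ≤ ((max m n:ℕ):ℝ) := by exact_mod_cast Nat.le_max_left m n
        linarith
      exact h3.trans hm.1.le
    have hx0 : 0 < x := hx.1
    calc (1/x) * ∫ t in Set.Ioc (0:ℝ) x, ff n t
        ≤ (1/x) * x := by
          apply mul_le_mul_of_nonneg_left (hIle.trans h2) (by positivity)
      _ = 1 := by field_simp
  · exact fun g hanti hint => sigma_null hanti hint
  · -- ℓ¹ lower bound
    refine ⟨1/2, by norm_num, fun m a => ?_⟩
    refine ⟨1/((m:ℝ)+1), ⟨by positivity, by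
      rw [div_le_one (by positivity)]
      linarith [Nat.cast_nonneg (α := ℝ) m]⟩, ?_⟩
    have hval : ∫ t in Set.Ioc (0:ℝ) (1/((m:ℝ)+1)), |∑ k ∈ Finset.range m, a k * ff k t|
        = (∑ k ∈ Finset.range m, |a k|) * (1/((m:ℝ)+2)) := by
      rw [setIntegral_congr_fun measurableSet_Ioc (fun t _ => abs_sum_eq m a t)]
      rw [integral_finset_sum _ (fun k _ => (integrableOn_ff_tail m k).const_mul |a k|)]
      have hterm : ∀ k ∈ Finset.range m,
          (∫ t in Set.Ioc (0:ℝ) (1/((m:ℝ)+1)), |a k| * ff k t) = |a k| * (1/((m:ℝ)+2)) := by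
        intro k hk
        rw [MeasureTheory.integral_const_mul, integral_ff_tail m k,
          Nat.max_eq_left (Nat.le_of_lt (Finset.mem_range.mp hk))]
      rw [Finset.sum_congr rfl hterm, ← Finset.sum_mul]
    rw [hval, one_div_one_div]
    have hS : 0 ≤ ∑ k ∈ Finset.range m, |a k| :=
      Finset.sum_nonneg (fun k _ => abs_nonneg (a k))
    have hfrac : (1:ℝ)/2 ≤ ((m:ℝ)+1)/((m:ℝ)+2) := by
      rw [div_le_div_iff₀ (by norm_num) (by positivity)]
      linarith [Nat.cast_nonneg (α := ℝ) m]
    calc (1:ℝ)/2 * ∑ k ∈ Finset.range m, |a k|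
        ≤ (((m:ℝ)+1)/((m:ℝ)+2)) * ∑ k ∈ Finset.range m, |a k| :=
          mul_le_mul_of_nonneg_right hfrac hS
      _ = ((m:ℝ)+1) * ((∑ k ∈ Finset.range m, |a k|) * (1/((m:ℝ)+2))) := by ring
end
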